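/- arXiv:2511.12253 — 2 statements merged into one kernel-verified Lean document; each statement's English description precedes it below -/
import Mathlib

section
/- (Greater Than Support) For every natural number lo and every natural number a, a ∈ ⟦greaterThan lo⟧ ↔ a > lo. -/
namespace PBT

inductive Gen : Type → Type 1 where
  | pure {α : Type} : α → Gen α
  | pick {α : Type} : Gen α → Gen α → Gen α
  | bind {α β : Type} : Gen α → (α → Gen β) → Gen β
  | indexed {α : Type} : (ℕ → Gen (Option α)) → Gen α
  | assume {α : Type} : (b : Bool) → (b = true → Gen α) → Gen α

instance : Pure Gen := ⟨Gen.pure⟩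
instance : Bind Gen := ⟨Gen.bind⟩

def Gen.support : {α : Type} → Gen α → Set α
  | _, .pure a' => {a | a = a'}
  | _, .pick x y => {a | a ∈ x.support ∨ a ∈ y.support}
  | _, .bind x f => {a | ∃ a', a' ∈ x.support ∧ a ∈ (f a').support}
  | _, .indexed f => {a | (∃ n, some a ∈ (f n).support) ∧
      (∀ a' n, some a' ∈ (f n).support → some a' ∈ (f (n + 1)).support)}
  | _, .assume b k => {a | ∃ h : b = true, a ∈ (k h).support}

notation (priority := high) "⟦" g "⟧" => Gen.support g

def arbNat.go : ℕ → Gen (Option ℕ)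
  | 0 => .pure none
  | fuel + 1 =>
    .pick (.pure (some 0))
      (arbNat.go fuel >>= fun on' =>
        match on' with
        | none => .pure none
        | some n' => .pure (some (1 + n')))

def arbNat : Gen ℕ := .indexed arbNat.go

def greaterThan (n : ℕ) : Gen ℕ := arbNat >>= fun lo => .pure (lo + 1 + n)

/-! With fuel `k`, `arbNat.go` yields exactly `some 0, …, some (k - 1)`. These supports grow with
`k`, so the monotonicity side condition of `indexed` holds and `arbNat` is supported on all of `ℕ`;
`greaterThan lo` shifts that support by `lo + 1`. -/

namespace Gen

variable {α β : Type}

@[simp]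
theorem mem_support_pure (a a' : α) : a ∈ ⟦(pure a' : Gen α)⟧ ↔ a = a' := Iff.rfl

@[simp]
theorem mem_support_pick (x y : Gen α) (a : α) : a ∈ ⟦pick x y⟧ ↔ a ∈ ⟦x⟧ ∨ a ∈ ⟦y⟧ := Iff.rfl

@[simp]
theorem mem_support_bind (x : Gen α) (f : α → Gen β) (b : β) :
    b ∈ ⟦x >>= f⟧ ↔ ∃ a ∈ ⟦x⟧, b ∈ ⟦f a⟧ := Iff.rfl

theorem mem_support_indexed (f : ℕ → Gen (Option α)) (a : α) :
    a ∈ ⟦indexed f⟧ ↔ (∃ n, some a ∈ ⟦f n⟧) ∧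
      ∀ a' n, some a' ∈ ⟦f n⟧ → some a' ∈ ⟦f (n + 1)⟧ := Iff.rfl

end Gen

open Gen

theorem some_mem_support_go_iff (fuel n : ℕ) : some n ∈ ⟦arbNat.go fuel⟧ ↔ n < fuel := by
  induction fuel generalizing n with
  | zero => simp [arbNat.go]
  | succ fuel ih =>
    simp only [arbNat.go, mem_support_pick, mem_support_pure, Option.some.injEq,
      mem_support_bind]
    constructor
    · rintro (rfl | ⟨o, ho, hn⟩)
      · omega
      · cases o with
        | none => simp at hn
        | some m =>
          rw [mem_support_pure, Option.some.injEq] at hn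
          have := (ih m).1 ho
          omega
    · intro hn
      cases n with
      | zero => exact .inl rfl
      | succ m => exact .inr ⟨some m, (ih m).2 (by omega), by simp; omega⟩

theorem mem_support_arbNat (a : ℕ) : a ∈ ⟦arbNat⟧ := by
  simp only [arbNat, mem_support_indexed, some_mem_support_go_iff]
  exact ⟨⟨a + 1, a.lt_succ_self⟩, fun _ n h => h.trans n.lt_succ_self⟩

theorem greaterThan_support (lo : ℕ) (a : ℕ) : a ∈ ⟦greaterThan lo⟧ ↔ a > lo := by
  simp only [greaterThan, mem_support_bind, mem_support_pure]
  constructor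
  · rintro ⟨l, -, rfl⟩
    omega
  · intro h
    exact ⟨a - 1 - lo, mem_support_arbNat _, by omega⟩

end PBT
end

section
/- (Optimization rule 6 is support-preserving) For any x : Gen α, b : Bool, and k : b = true → Gen α, the generators pick x (assume b k) and (if h : b = true then pick x (k h) else x) have the same support: for all a, a ∈ ⟦pick x (assume b k)⟧ ↔ a ∈ ⟦if h : b = true then pick x (k h) else x⟧. -/
namespace PBT

@[simp]
theorem Gen.mem_support_pick_s11 {α : Type} (x y : Gen α) (a : α) :
    a ∈ ⟦Gen.pick x y⟧ ↔ a ∈ ⟦x⟧ ∨ a ∈ ⟦y⟧ :=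
  Iff.rfl

@[simp]
theorem Gen.mem_support_assume {α : Type} (b : Bool) (k : b = true → Gen α) (a : α) :
    a ∈ ⟦Gen.assume b k⟧ ↔ ∃ h : b = true, a ∈ ⟦k h⟧ :=
  Iff.rfl

theorem opt_rule6_support {α : Type} (x : Gen α) (b : Bool) (k : b = true → Gen α)
    (a : α) :
    a ∈ ⟦Gen.pick x (Gen.assume b k)⟧ ↔
      a ∈ ⟦if h : b = true then Gen.pick x (k h) else x⟧ := by
  cases b <;> simp

end PBT
end
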